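/- If ∇f is Lipschitz continuous with constant L > 0, then the step size τₖ produced by the non-monotone backtracking line search in the inexact SGP method satisfies τₖ ≥ τ_min := min{1, ω̲(1−σ)/(α_max μ L)}. -/

import Mathlib

open RealInnerProductSpace

abbrev EucSp (n : ℕ) := EuclideanSpace ℝ (Fin n)

noncomputable def dipr {n : ℕ} (D : Matrix (Fin n) (Fin n) ℝ) (x y : EucSp n) : ℝ :=
  ⟪(Matrix.toEuclideanLin D) x, y⟫

noncomputable def dnorm {n : ℕ} (D : Matrix (Fin n) (Fin n) ℝ) (x : EucSp n) : ℝ :=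
  Real.sqrt (dipr D x x)

/-! If the backtracking rejected the trial step `t ≤ τₖ / ω̲`, the descent lemma bounds the
Armijo defect by `(L/2) t² ‖wᵏ - xᵏ‖²`, so `(1 - σ) ⟪∇f(xᵏ), xᵏ - wᵏ⟫ < (L/2) t ‖wᵏ - xᵏ‖²`.
Testing the inexactness condition for `wᵏ` at `y = xᵏ` gives
`‖wᵏ - xᵏ‖² ≤ 2 αₖ μ ⟪∇f(xᵏ), xᵏ - wᵏ⟫`, hence `t > (1 - σ) / (αₖ μ L)` and
`τₖ ≥ ω̲ t ≥ ω̲ (1 - σ) / (α_max μ L)`. -/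

section Descent

variable {E : Type*} [NormedAddCommGroup E] [InnerProductSpace ℝ E] [CompleteSpace E]

theorem le_add_inner_add_sq_of_lipschitz_gradient {f : E → ℝ} {g : E → E}
    (hf : ∀ x, HasGradientAt f (g x) x) {L : ℝ} (hLip : ∀ x y, ‖g x - g y‖ ≤ L * ‖x - y‖)
    (x y : E) : f y ≤ f x + ⟪g x, y - x⟫ + L / 2 * ‖y - x‖ ^ 2 := by
  suffices key : ∀ d, f (x + d) ≤ f x + ⟪g x, d⟫ + L / 2 * ‖d‖ ^ 2 by
    simpa using key (y - x)
  intro d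
  -- `φ` is antitone on `[0, ∞)`: its derivative `⟪g (x + t • d) - g x, d⟫ - L t ‖d‖²` is
  -- nonpositive by Cauchy–Schwarz and the Lipschitz bound.
  set φ : ℝ → ℝ := fun t => f (x + t • d) - t * ⟪g x, d⟫ - L / 2 * t ^ 2 * ‖d‖ ^ 2
  have hφ : ∀ t, HasDerivAt φ (⟪g (x + t • d), d⟫ - ⟪g x, d⟫ - L * t * ‖d‖ ^ 2) t := by
    intro t
    have hline : HasDerivAt (fun t : ℝ => x + t • d) d t := by
      simpa using ((hasDerivAt_id t).smul_const d).const_add x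
    have hfline : HasDerivAt (fun t : ℝ => f (x + t • d)) ⟪g (x + t • d), d⟫ t := by
      exact (hf (x + t • d)).hasFDerivAt.comp_hasDerivAt t hline
    refine ((hfline.sub ((hasDerivAt_id t).mul_const ⟪g x, d⟫)).sub
      (((hasDerivAt_pow 2 t).const_mul (L / 2)).mul_const (‖d‖ ^ 2))).congr_deriv ?_
    simp only [Nat.cast_ofNat]
    ring
  have hφ' : ∀ t ∈ interior (Set.Ici (0 : ℝ)),
      ⟪g (x + t • d), d⟫ - ⟪g x, d⟫ - L * t * ‖d‖ ^ 2 ≤ 0 := by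
    intro t ht
    rw [interior_Ici, Set.mem_Ioi] at ht
    have hg : ‖g (x + t • d) - g x‖ ≤ L * (t * ‖d‖) := by
      simpa [norm_smul, abs_of_pos ht] using hLip (x + t • d) x
    have hcs := real_inner_le_norm (g (x + t • d) - g x) d
    rw [inner_sub_left] at hcs
    nlinarith [mul_le_mul_of_nonneg_right hg (norm_nonneg d)]
  have hanti : AntitoneOn φ (Set.Ici 0) :=
    antitoneOn_of_hasDerivWithinAt_nonpos (convex_Ici 0)
      (fun t _ => (hφ t).continuousAt.continuousWithinAt)
      (fun t _ => (hφ t).hasDerivWithinAt) hφ'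
  have h01 : φ 1 ≤ φ 0 := hanti (Set.mem_Ici.2 le_rfl) (Set.mem_Ici.2 zero_le_one) zero_le_one
  simp only [φ, one_smul, zero_smul, add_zero] at h01
  linarith

theorem lt_of_armijo_fails {f : E → ℝ} {g : E → E} (hf : ∀ x, HasGradientAt f (g x) x)
    {L : ℝ} (hLip : ∀ x y, ‖g x - g y‖ ≤ L * ‖x - y‖) {σ ν K t : ℝ} {x d : E}
    (hσ : σ < 1) (hν : 0 ≤ ν) (hK : 0 < K) (ht : 0 < t) (hdir : ‖d‖ ^ 2 ≤ K * -⟪g x, d⟫)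
    (hfail : f x + σ * t * ⟪g x, d⟫ + ν < f (x + t • d)) :
    2 * (1 - σ) < K * L * t := by
  have hdesc := le_add_inner_add_sq_of_lipschitz_gradient hf hLip x (x + t • d)
  rw [add_sub_cancel_left, real_inner_smul_right, norm_smul, Real.norm_of_nonneg ht.le,
    mul_pow] at hdesc
  have hstep : (1 - σ) * -⟪g x, d⟫ < L / 2 * t * ‖d‖ ^ 2 := by
    have : t * ((1 - σ) * -⟪g x, d⟫) < t * (L / 2 * t * ‖d‖ ^ 2) := by nlinarith
    exact lt_of_mul_lt_mul_left this ht.le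
  have hd : 0 < ‖d‖ ^ 2 := by
    refine pow_pos (norm_pos_iff.2 ?_) 2
    rintro rfl
    simp at hstep
  have : 2 * (1 - σ) * ‖d‖ ^ 2 < K * L * t * ‖d‖ ^ 2 := by
    nlinarith [mul_le_mul_of_nonneg_left hdir (sub_nonneg.2 hσ.le), mul_lt_mul_of_pos_left hstep hK]
  exact lt_of_mul_lt_mul_right this hd.le

end Descent

section ScaledProjection

variable {n : ℕ} {D : Matrix (Fin n) (Fin n) ℝ}

theorem le_dipr_self_of_le_eigenvalues (hD : D.IsHermitian) {c : ℝ}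
    (hc : ∀ i, c ≤ hD.eigenvalues i) (v : EucSp n) : c * ‖v‖ ^ 2 ≤ dipr D v v := by
  set b := hD.eigenvectorBasis
  have hb : ∀ i, Matrix.toEuclideanLin D (b i) = hD.eigenvalues i • b i := fun i => by
    ext j
    simpa [Matrix.toLpLin_apply] using congrFun (hD.mulVec_eigenvectorBasis i) j
  have hv : v = ∑ i, b.repr v i • b i := (b.sum_repr v).symm
  have hDv : Matrix.toEuclideanLin D v = ∑ i, (hD.eigenvalues i * b.repr v i) • b i := by
    conv_lhs => rw [hv]
    simp only [map_sum, map_smul, hb, smul_smul, mul_comm]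
  have hquad : dipr D v v = ∑ i, hD.eigenvalues i * b.repr v i ^ 2 := by
    rw [dipr, hDv, sum_inner]
    refine Finset.sum_congr rfl fun i _ => ?_
    rw [real_inner_smul_left, ← b.repr_apply_apply]
    ring
  have hnorm : ‖v‖ ^ 2 = ∑ i, b.repr v i ^ 2 := by
    rw [← b.repr.norm_map, EuclideanSpace.norm_sq_eq]
    simp
  rw [hquad, hnorm, Finset.mul_sum]
  exact Finset.sum_le_sum fun i _ => mul_le_mul_of_nonneg_right (hc i) (sq_nonneg _)

theorem dnorm_sq (hD : D.PosDef) (v : EucSp n) : dnorm D v ^ 2 = dipr D v v := by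
  refine Real.sq_sqrt ?_
  simpa using le_dipr_self_of_le_eigenvalues hD.1 (fun i => (hD.eigenvalues_pos i).le) v

theorem dipr_neg_neg (v : EucSp n) : dipr D (-v) (-v) = dipr D v v := by
  simp [dipr]

theorem sq_norm_sub_le_of_approx_proj (hD : D.PosDef) {μ α ζ : ℝ} (hμ : 0 < μ)
    (heig : ∀ i, 1 / μ ≤ hD.1.eigenvalues i) (hζ : 0 ≤ ζ) {x w gx : EucSp n}
    (hw : dipr D (x - α • Matrix.toEuclideanLin D⁻¹ gx - w) (x - w) ≤
      (1 - ζ) / 2 * dnorm D (w - x) ^ 2) :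
    ‖w - x‖ ^ 2 ≤ 2 * α * μ * ⟪gx, x - w⟫ := by
  have hDinv : Matrix.toEuclideanLin D (Matrix.toEuclideanLin D⁻¹ gx) = gx := by
    simp [Matrix.toLpLin_apply, Matrix.mulVec_mulVec,
      Matrix.mul_nonsing_inv D (isUnit_iff_ne_zero.2 hD.det_pos.ne')]
  have hexpand : dipr D (x - α • Matrix.toEuclideanLin D⁻¹ gx - w) (x - w) =
      dipr D (x - w) (x - w) - α * ⟪gx, x - w⟫ := by
    rw [sub_right_comm, dipr, dipr, map_sub, map_smul, hDinv, inner_sub_left,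
      real_inner_smul_left]
  rw [hexpand, dnorm_sq hD, ← neg_sub x w, dipr_neg_neg] at hw
  have hQ : 1 / μ * ‖x - w‖ ^ 2 ≤ dipr D (x - w) (x - w) :=
    le_dipr_self_of_le_eigenvalues hD.1 heig _
  have hQ0 : 0 ≤ dipr D (x - w) (x - w) := le_trans (by positivity) hQ
  have hQα : dipr D (x - w) (x - w) ≤ 2 * α * ⟪gx, x - w⟫ := by nlinarith
  rw [one_div, inv_mul_le_iff₀ hμ] at hQ
  rw [norm_sub_rev]
  nlinarith

end ScaledProjection

theorem stmt15_general {n : ℕ} (C : Set (EucSp n))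
    (f : EucSp n → ℝ) (g : EucSp n → EucSp n) (hf : ∀ x, HasGradientAt f (g x) x)
    (L μ σ ζmin αmax ωlow : ℝ) (hL : 0 < L) (hμ : 1 ≤ μ) (hσ : 0 < σ ∧ σ < 1)
    (hζmin : 0 < ζmin ∧ ζmin < 1) (hω : 0 < ωlow ∧ ωlow < 1)
    (hLip : ∀ x y : EucSp n, ‖g x - g y‖ ≤ L * ‖x - y‖)
    (Dm : ℕ → Matrix (Fin n) (Fin n) ℝ) (hpos : ∀ k, (Dm k).PosDef)
    (heig : ∀ k i, 1 / μ ≤ (hpos k).1.eigenvalues i ∧ (hpos k).1.eigenvalues i ≤ μ)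
    (α ζ τ ν : ℕ → ℝ)
    (hα : ∀ k, 0 < α k ∧ α k ≤ αmax) (hζ : ∀ k, ζmin < ζ k ∧ ζ k ≤ 1)
    (hν : ∀ k, 0 ≤ ν k)
    (X w z : ℕ → EucSp n) (hXC : ∀ k, X k ∈ C)
    (hz : ∀ k, z k = X k - α k • (Matrix.toEuclideanLin (Dm k)⁻¹) (g (X k)))
    (hA1 : ∀ k, w k ∈ C ∧ ∀ y ∈ C,
      dipr (Dm k) (z k - w k) (y - w k) ≤ ((1 - ζ k) / 2) * (dnorm (Dm k) (w k - X k)) ^ 2)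
    (hback : ∀ k, τ k = 1 ∨ ∃ τhat : ℝ, 0 < τhat ∧ τhat ≤ min 1 (τ k / ωlow) ∧
      f (X k + τhat • (w k - X k)) >
        f (X k) + σ * τhat * ⟪g (X k), w k - X k⟫ + ν k) :
    ∀ k, min 1 (ωlow * (1 - σ) / (αmax * μ * L)) ≤ τ k := by
  intro k
  rcases hback k with hτ1 | ⟨t, ht, htτ, hfail⟩
  · exact hτ1 ▸ min_le_left _ _
  obtain ⟨hα0, hαk⟩ := hα k
  have hμ0 : 0 < μ := by linarith
  have hproj := (hA1 k).2 (X k) (hXC k)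
  rw [hz k] at hproj
  have hdir := sq_norm_sub_le_of_approx_proj (hpos k) hμ0 (fun i => (heig k i).1)
    (by linarith [(hζ k).1, hζmin.1]) hproj
  rw [← neg_sub (w k), inner_neg_right] at hdir
  have hstep := lt_of_armijo_fails hf hLip hσ.2 (hν k) (by positivity) ht hdir hfail
  have hωt : ωlow * t ≤ τ k := by
    have := htτ.trans (min_le_right _ _)
    rwa [le_div_iff₀ hω.1, mul_comm] at this
  calc min 1 (ωlow * (1 - σ) / (αmax * μ * L))
      ≤ ωlow * (1 - σ) / (αmax * μ * L) := min_le_right _ _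
    _ ≤ ωlow * (1 - σ) / (α k * μ * L) := by
        gcongr
        exact mul_nonneg hω.1.le (sub_nonneg.2 hσ.2.le)
    _ ≤ ωlow * t := by
        rw [div_le_iff₀ (by positivity)]
        nlinarith [hω.1]
    _ ≤ τ k := hωt

theorem stmt15 {n : ℕ} (C : Set (EucSp n)) (hcl : IsClosed C) (hconv : Convex ℝ C)
    (f : EucSp n → ℝ) (g : EucSp n → EucSp n) (hf : ∀ x, HasGradientAt f (g x) x)
    (L μ σ ζmin αmax ωlow : ℝ) (hL : 0 < L) (hμ : 1 ≤ μ) (hσ : 0 < σ ∧ σ < 1)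
    (hζmin : 0 < ζmin ∧ ζmin < 1) (hαmax : 0 < αmax) (hω : 0 < ωlow ∧ ωlow < 1)
    (hLip : ∀ x y : EucSp n, ‖g x - g y‖ ≤ L * ‖x - y‖)
    (Dm : ℕ → Matrix (Fin n) (Fin n) ℝ) (hpos : ∀ k, (Dm k).PosDef)
    (heig : ∀ k i, 1 / μ ≤ (hpos k).1.eigenvalues i ∧ (hpos k).1.eigenvalues i ≤ μ)
    (α ζ τ ν : ℕ → ℝ)
    (hα : ∀ k, 0 < α k ∧ α k ≤ αmax) (hζ : ∀ k, ζmin < ζ k ∧ ζ k ≤ 1)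
    (hτ : ∀ k, 0 < τ k ∧ τ k ≤ 1) (hν : ∀ k, 0 ≤ ν k)
    (X w z : ℕ → EucSp n) (hXC : ∀ k, X k ∈ C)
    (hz : ∀ k, z k = X k - α k • (Matrix.toEuclideanLin (Dm k)⁻¹) (g (X k)))
    (hA1 : ∀ k, w k ∈ C ∧ ∀ y ∈ C,
      dipr (Dm k) (z k - w k) (y - w k) ≤ ((1 - ζ k) / 2) * (dnorm (Dm k) (w k - X k)) ^ 2)
    (hback : ∀ k, τ k = 1 ∨ ∃ τhat : ℝ, 0 < τhat ∧ τhat ≤ min 1 (τ k / ωlow) ∧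
      f (X k + τhat • (w k - X k)) >
        f (X k) + σ * τhat * ⟪g (X k), w k - X k⟫ + ν k) :
    ∀ k, min 1 (ωlow * (1 - σ) / (αmax * μ * L)) ≤ τ k :=
  stmt15_general C f g hf L μ σ ζmin αmax ωlow hL hμ hσ hζmin hω hLip Dm hpos heig α ζ τ ν hα hζ hν
    X w z hXC hz hA1 hback
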